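/- arXiv:1305.2044 — 6 statements merged into one kernel-verified Lean document; each statement's English description precedes it below -/
import Mathlib

section
/- Let g ∈ H_n and i ∈ {1,…,n} with t_i(g) > 0. Then for every r with 0 ≤ r < t_i(g) there exists m ∈ ℕ such that X_{i,r}(g) is almost equal to the forward orbit {(i,m)g^k : k ≥ 0}. -/
namespace HoughtonPaper

/-- The set `X_n = {1,…,n} × ℕ` (rays indexed by `Fin n`). -/
abbrev X (n : ℕ) := Fin n × ℕ

/-- `g` acts as the translation by `t i` on the ray `i` from the point `z` on. -/
def EvTransFrom {n : ℕ} (g : Equiv.Perm (X n)) (t : Fin n → ℤ) (z : ℕ) : Prop :=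
  ∀ (i : Fin n) (m : ℕ), z ≤ m →
    (g (i, m)).1 = i ∧ ((g (i, m)).2 : ℤ) = (m : ℤ) + t i

/-- `g` is eventually a translation with translation vector `t`. -/
def EvTrans {n : ℕ} (g : Equiv.Perm (X n)) (t : Fin n → ℤ) : Prop :=
  ∃ z : ℕ, EvTransFrom g t z

/-- Membership in Houghton's group `H_n`. -/
def InH {n : ℕ} (g : Equiv.Perm (X n)) : Prop :=
  ∃ t : Fin n → ℤ, EvTrans g t

/-- Support of a permutation. -/
def supp {α : Type*} (g : Equiv.Perm α) : Set α := {x | g x ≠ x}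

/-- Membership in `FSym(X_n)`, the finitely supported permutations. -/
def InFSym {n : ℕ} (g : Equiv.Perm (X n)) : Prop := (supp g).Finite

/-- Two sets are almost equal if their symmetric difference is finite. -/
def AlmostEq {α : Type*} (A B : Set α) : Prop := (symmDiff A B).Finite

/-- The set `X_{i,r}(g) = {(i,m) : m ≡ r mod |t_i(g)|}`, for `t` the translation vector. -/
def Xir {n : ℕ} (i : Fin n) (t : Fin n → ℤ) (r : ℕ) : Set (X n) :=
  {p : X n | p.1 = i ∧ p.2 % (t i).natAbs = r}

/-- Forward orbit `{(i,m)g^k : k ≥ 0}`. -/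
def fwdOrbit {n : ℕ} (g : Equiv.Perm (X n)) (p : X n) : Set (X n) :=
  Set.range fun k : ℕ => (g ^ k) p

/-- The orbit `{x g^k : k ∈ ℤ}`. -/
def orbit {n : ℕ} (g : Equiv.Perm (X n)) (p : X n) : Set (X n) :=
  Set.range fun k : ℤ => (g ^ k) p

/-- `A` is an infinite orbit of `g`. -/
def IsInfOrbit {n : ℕ} (g : Equiv.Perm (X n)) (A : Set (X n)) : Prop :=
  (∃ p : X n, A = orbit g p) ∧ A.Infinite

/-- The generating relation of `∼_g`: some infinite orbit of `g` is almost equal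
to `X_{i,r}(g) ∪ X_{j,s}(g)`. -/
def BaseRel {n : ℕ} (g : Equiv.Perm (X n)) (t : Fin n → ℤ) (i j : Fin n) : Prop :=
  ∃ r s : ℕ, r < (t i).natAbs ∧ s < (t j).natAbs ∧
    ∃ A : Set (X n), IsInfOrbit g A ∧ AlmostEq A (Xir i t r ∪ Xir j t s)

/-- The equivalence relation `∼_g` on the rays, generated by `BaseRel`. -/
def SimRel {n : ℕ} (g : Equiv.Perm (X n)) (t : Fin n → ℤ) : Fin n → Fin n → Prop :=
  Relation.EqvGen (BaseRel g t)

def genFun {n : ℕ} [NeZero n] (i : Fin n) : X n → X n :=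
  fun p =>
    if p.1 = 0 then ((0 : Fin n), p.2 + 1)
    else if p.1 = i then (if p.2 = 0 then ((0 : Fin n), 0) else (i, p.2 - 1))
    else p

def genInvFun {n : ℕ} [NeZero n] (i : Fin n) : X n → X n :=
  fun p =>
    if p.1 = 0 then (if p.2 = 0 then (i, 0) else ((0 : Fin n), p.2 - 1))
    else if p.1 = i then (i, p.2 + 1)
    else p

/-- The generator `g_i` of Houghton's group (ray `1` of the paper is ray `0` here). -/
def gen {n : ℕ} [NeZero n] (i : Fin n) (hi : i ≠ 0) : Equiv.Perm (X n) where
  toFun := genFun i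
  invFun := genInvFun i
  left_inv := by
    rintro ⟨j, m⟩
    by_cases hj : j = 0
    · subst hj
      simp [genFun, genInvFun]
    · by_cases hji : j = i
      · subst hji
        rcases Nat.eq_zero_or_pos m with hm | hm
        · subst hm; simp [genFun, genInvFun, hi]
        · simp [genFun, genInvFun, hi, hm.ne', Nat.sub_add_cancel hm]
      · simp [genFun, genInvFun, hj, hji]
  right_inv := by
    rintro ⟨j, m⟩
    by_cases hj : j = 0
    · subst hj
      rcases Nat.eq_zero_or_pos m with hm | hm
      · subst hm; simp [genFun, genInvFun, hi]
      · simp [genFun, genInvFun, hm.ne', hi.symm, Nat.sub_add_cancel hm]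
    · by_cases hji : j = i
      · subst hji
        simp [genFun, genInvFun, hj]
      · simp [genFun, genInvFun, hj, hji]

/-- The transposition `τ` exchanging `(1,0)` and `(2,0)` (here `(0,0)` and `(1,0)`). -/
def tau (n : ℕ) [NeZero n] : Equiv.Perm (X n) :=
  Equiv.swap ((0 : Fin n), 0) ((1 : Fin n), 0)

/-- Letters of the alphabet `{g_2,…,g_n}^{±1}`. -/
abbrev Letter (n : ℕ) [NeZero n] := {i : Fin n // i ≠ 0} × Bool

/-- Words over `{g_2,…,g_n}^{±1}`. -/
abbrev Word (n : ℕ) [NeZero n] := List (Letter n)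

def evalLetter {n : ℕ} [NeZero n] (l : Letter n) : Equiv.Perm (X n) :=
  if l.2 then gen l.1.1 l.1.2 else (gen l.1.1 l.1.2)⁻¹

/-- The element of `Sym(X_n)` represented by a word. -/
def wordProd {n : ℕ} [NeZero n] (w : Word n) : Equiv.Perm (X n) :=
  (w.map evalLetter).prod

end HoughtonPaper

open HoughtonPaper

theorem statement3 (n : ℕ) (hn : 2 ≤ n) (g : Equiv.Perm (X n)) (t : Fin n → ℤ)
    (hg : EvTrans g t) (i : Fin n) (hpos : 0 < t i) :
    ∀ r : ℕ, r < (t i).natAbs →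
      ∃ m : ℕ, AlmostEq (Xir i t r) (fwdOrbit g (i, m)) := by
  obtain ⟨z, hz⟩ := hg
  intro r hr
  set d := (t i).natAbs with hd
  have hd0 : 0 < d := Int.natAbs_pos.mpr hpos.ne'
  have hti : (d : ℤ) = t i := Int.natAbs_of_nonneg hpos.le
  refine ⟨z * d + r, ?_⟩
  set m := z * d + r with hm
  have hmz : z ≤ m := le_trans (Nat.le_mul_of_pos_right z hd0) (Nat.le_add_right _ _)
  have key : ∀ k : ℕ, (g ^ k) (i, m) = (i, m + k * d) := by
    intro k
    induction k with
    | zero => simp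
    | succ k ih =>
      have hk : z ≤ m + k * d := le_trans hmz (Nat.le_add_right _ _)
      have hzz := hz i (m + k * d) hk
      have h1 : (g ^ (k + 1)) (i, m) = g (i, m + k * d) := by
        rw [pow_succ', Equiv.Perm.mul_apply, ih]
      rw [h1]
      have h2 : ((g (i, m + k * d)).2 : ℤ) = ((m + (k + 1) * d : ℕ) : ℤ) := by
        rw [hzz.2, ← hti]; push_cast; ring
      have h2' : (g (i, m + k * d)).2 = m + (k + 1) * d := Nat.cast_injective h2
      exact Prod.ext hzz.1 h2'
  have hmmod : m % d = r := by
    have : m = r + z * d := by rw [hm]; ring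
    rw [this, Nat.add_mul_mod_self_right, Nat.mod_eq_of_lt hr]
  have hBA : fwdOrbit g (i, m) ⊆ Xir i t r := by
    rintro p ⟨k, rfl⟩
    show (g ^ k) (i, m) ∈ Xir i t r
    rw [key k]
    refine ⟨rfl, ?_⟩
    have h3 : m + k * d = r + (z + k) * d := by rw [hm]; ring
    rw [← hd, h3, Nat.add_mul_mod_self_right, Nat.mod_eq_of_lt hr]
  have hAB : Xir i t r \ fwdOrbit g (i, m) ⊆ {i} ×ˢ Set.Iio m := by
    rintro ⟨j, m'⟩ ⟨⟨hj, hmod⟩, hnot⟩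
    simp only [Set.mem_prod, Set.mem_singleton_iff, Set.mem_Iio]
    refine ⟨hj, ?_⟩
    by_contra hlt
    push_neg at hlt
    apply hnot
    have hmeq : m ≡ m' [MOD d] := by
      unfold Nat.ModEq
      rw [hmmod]
      exact (hmod).symm
    obtain ⟨k, hk⟩ := (Nat.modEq_iff_dvd' hlt).mp hmeq
    refine ⟨k, ?_⟩
    show (g ^ k) (i, m) = (j, m')
    rw [key k]
    simp only at hj
    have hd2 : m' = m + k * d := by rw [Nat.mul_comm]; omega
    rw [hd2, hj]
  have hfin : ((({i} : Set (Fin n)) ×ˢ Set.Iio m) : Set (X n)).Finite :=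
    Set.Finite.prod (Set.finite_singleton i) (Set.finite_Iio m)
  have : symmDiff (Xir i t r) (fwdOrbit g (i, m)) ⊆ {i} ×ˢ Set.Iio m := by
    rw [Set.symmDiff_def]
    apply Set.union_subset hAB
    intro p hp
    exact (hp.2 (hBA hp.1)).elim
  exact hfin.subset this
end

section
/- Every infinite orbit of an element g ∈ H_n is almost equal to X_{i,r}(g) ∪ X_{j,s}(g) for some indices i ≠ j in {1,…,n} with t_i(g) ≠ 0 and t_j(g) ≠ 0, and some r, s with 0 ≤ r < |t_i(g)| and 0 ≤ s < |t_j(g)|. -/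
open HoughtonPaper

/-!
The points of an infinite orbit are pairwise distinct, so only finitely many of them lie in the
bounded region where `g` fails to be a translation. Hence the forward orbit eventually stays on one
ray `i`, moving as the progression `(i, m₀ + d t_i)`; injectivity forces `t_i > 0`, and such a
progression is almost `X_{i,r}`. The backward orbit is the forward orbit of `g⁻¹`, which is an
eventual translation by `-t`, so it ends on a ray `j` with `t_j < 0`; in particular `j ≠ i`.
-/

open Function

namespace Equiv.Perm

variable {α : Type*} {g : Perm α} {p : α}

theorem injective_zpow_apply_of_infinite (h : (Set.range fun k : ℤ => (g ^ k) p).Infinite) :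
    Injective fun k : ℤ => (g ^ k) p := by
  intro a b hab
  by_contra hne
  have hfix : (g ^ (a - b)) p = p := by
    rw [sub_eq_neg_add, zpow_add, zpow_neg, Equiv.Perm.mul_apply]
    exact Equiv.Perm.inv_eq_iff_eq.2 hab
  have hper : MulAction.period g p ≠ 0 := by
    intro h0
    rw [← Equiv.Perm.smul_def, MulAction.zpow_smul_eq_iff_period_dvd, h0, Nat.cast_zero,
      zero_dvd_iff] at hfix
    exact hne (by omega)
  refine h (((Set.finite_Ico 0 (MulAction.period g p : ℤ)).image fun k => (g ^ k) p).subset ?_)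
  rintro _ ⟨k, rfl⟩
  exact ⟨k % MulAction.period g p, ⟨Int.emod_nonneg _ (by omega), Int.emod_lt_of_pos _ (by omega)⟩,
    MulAction.zpow_mod_period_smul (g := g) (a := p) k⟩

theorem injective_pow_apply_of_injective_zpow (h : Injective fun k : ℤ => (g ^ k) p) :
    Injective fun k : ℕ => (g ^ k) p := by
  simpa only [comp_def, zpow_natCast] using h.comp Nat.cast_injective

theorem injective_zpow_inv_apply_of_injective_zpow (h : Injective fun k : ℤ => (g ^ k) p) :
    Injective fun k : ℤ => (g⁻¹ ^ k) p := by
  simpa only [comp_def, inv_zpow'] using h.comp neg_injective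

end Equiv.Perm

namespace HoughtonPaper

section AlmostEq

variable {α : Type*} {A B C D : Set α}

theorem AlmostEq.trans (hAB : AlmostEq A B) (hBC : AlmostEq B C) : AlmostEq A C :=
  (Set.Finite.union hAB hBC).subset (symmDiff_triangle A B C)

theorem AlmostEq.union (hAB : AlmostEq A B) (hCD : AlmostEq C D) :
    AlmostEq (A ∪ C) (B ∪ D) :=
  (Set.Finite.union hAB hCD).subset Set.union_symmDiff_union_subset

theorem almostEq_range_add (f : ℕ → α) (K : ℕ) :
    AlmostEq (Set.range f) (Set.range fun d => f (d + K)) := by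
  refine ((Set.finite_Iio K).image f).subset ?_
  rintro _ (⟨⟨k, rfl⟩, hk⟩ | ⟨⟨d, rfl⟩, hd⟩)
  · refine ⟨k, Set.mem_Iio.2 (not_le.1 fun hKk => hk ⟨k - K, ?_⟩), rfl⟩
    simp only [Nat.sub_add_cancel hKk]
  · exact absurd ⟨d + K, rfl⟩ hd

end AlmostEq

variable {n : ℕ}

theorem finite_setOf_snd_lt (C : ℕ) : {x : X n | x.2 < C}.Finite :=
  (Set.finite_univ.prod (Set.finite_Iio C)).subset fun _ hx => ⟨trivial, hx⟩

theorem Xir_neg (i : Fin n) (t : Fin n → ℤ) (r : ℕ) : Xir i (-t) r = Xir i t r := by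
  simp only [Xir, Pi.neg_apply, Int.natAbs_neg]

theorem almostEq_range_Xir (i : Fin n) (t : Fin n → ℤ) (m₀ : ℕ) :
    AlmostEq (Set.range fun d : ℕ => ((i, m₀ + d * (t i).natAbs) : X n))
      (Xir i t (m₀ % (t i).natAbs)) := by
  refine (finite_setOf_snd_lt m₀).subset ?_
  rintro x (⟨⟨d, rfl⟩, hx⟩ | ⟨⟨hx1, hx2⟩, hx⟩)
  · exact absurd ⟨rfl, Nat.add_mul_mod_self_right _ _ _⟩ hx
  · refine not_le.1 fun hm : m₀ ≤ x.2 => hx ⟨(x.2 - m₀) / (t i).natAbs, Prod.ext hx1.symm ?_⟩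
    have hdvd : (t i).natAbs ∣ x.2 - m₀ := (Nat.modEq_iff_dvd' hm).1 hx2.symm
    simp only [Nat.div_mul_cancel hdvd]
    omega

theorem orbit_eq_fwdOrbit_union (g : Equiv.Perm (X n)) (p : X n) :
    orbit g p = fwdOrbit g p ∪ fwdOrbit g⁻¹ p := by
  ext x
  constructor
  · rintro ⟨k, rfl⟩
    obtain ⟨d, rfl | rfl⟩ := Int.eq_nat_or_neg k
    · exact Or.inl ⟨d, by simp only [zpow_natCast]⟩
    · exact Or.inr ⟨d, by simp only [zpow_neg, zpow_natCast, inv_pow]⟩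
  · rintro (⟨d, rfl⟩ | ⟨d, rfl⟩)
    · exact ⟨d, by simp only [zpow_natCast]⟩
    · exact ⟨-d, by simp only [zpow_neg, zpow_natCast, inv_pow]⟩

variable {g : Equiv.Perm (X n)} {t : Fin n → ℤ}

theorem EvTrans.inv (h : EvTrans g t) : EvTrans g⁻¹ (-t) := by
  obtain ⟨z, hz⟩ := h
  refine ⟨z + ∑ i, (t i).natAbs, fun i m hm => ?_⟩
  have hti : (t i).natAbs ≤ ∑ i, (t i).natAbs :=
    Finset.single_le_sum (f := fun i => (t i).natAbs) (fun _ _ => Nat.zero_le _) (Finset.mem_univ i)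
  have hm' : (((m : ℤ) - t i).toNat : ℤ) = m - t i := Int.toNat_of_nonneg (by omega)
  obtain ⟨h1, h2⟩ := hz i ((m : ℤ) - t i).toNat (by omega)
  have hg : g (i, ((m : ℤ) - t i).toNat) = (i, m) := Prod.ext h1 (by omega)
  rw [Equiv.Perm.inv_eq_iff_eq.2 hg.symm]
  exact ⟨rfl, by rw [hm', Pi.neg_apply]; ring⟩

theorem EvTransFrom.pow_apply {z : ℕ} (h : EvTransFrom g t z) {x : X n}
    (hx : ∀ d : ℕ, z ≤ ((g ^ d) x).2) (d : ℕ) :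
    ((g ^ d) x).1 = x.1 ∧ (((g ^ d) x).2 : ℤ) = x.2 + d * t x.1 := by
  induction d with
  | zero => simp
  | succ d ih =>
    have hstep := h ((g ^ d) x).1 ((g ^ d) x).2 (hx d)
    rw [Prod.mk.eta, ih.1] at hstep
    rw [pow_succ', Equiv.Perm.mul_apply, hstep.1, hstep.2, ih.2]
    push_cast
    exact ⟨rfl, by ring⟩

theorem EvTransFrom.exists_progression {z : ℕ} (h : EvTransFrom g t z) {p : X n}
    (hp : Injective fun k : ℕ => (g ^ k) p) :
    ∃ (K : ℕ) (i : Fin n) (m₀ : ℕ), 0 < t i ∧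
      ∀ d : ℕ, (g ^ (d + K)) p = (i, m₀ + d * (t i).natAbs) := by
  obtain ⟨b, hb⟩ := ((finite_setOf_snd_lt z).preimage hp.injOn).bddAbove
  set x := (g ^ (b + 1)) p
  have hshift : ∀ d : ℕ, (g ^ d) x = (g ^ (d + (b + 1))) p := fun d => by
    rw [pow_add, Equiv.Perm.mul_apply]
  have hx : ∀ d : ℕ, z ≤ ((g ^ d) x).2 := fun d =>
    not_lt.1 fun hlt => by
      have := hb (show ((g ^ (d + (b + 1))) p).2 < z by rwa [← hshift]); omega
  have hprog := h.pow_apply hx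
  have hpos : 0 < t x.1 := by
    by_contra! hneg
    have hinj : Injective fun d : ℕ => (g ^ d) x := by
      simp only [hshift]
      exact hp.comp (add_left_injective (b + 1))
    refine Set.infinite_range_of_injective hinj ((finite_setOf_snd_lt (x.2 + 1)).subset ?_)
    rintro _ ⟨d, rfl⟩
    have hd := (hprog d).2
    have hdt : (d : ℤ) * t x.1 ≤ 0 := mul_nonpos_of_nonneg_of_nonpos d.cast_nonneg hneg
    show ((g ^ d) x).2 < x.2 + 1
    omega
  refine ⟨b + 1, x.1, x.2, hpos, fun d => ?_⟩
  rw [← hshift]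
  refine Prod.ext (hprog d).1 ?_
  zify
  rw [abs_of_pos hpos]
  exact (hprog d).2

theorem EvTrans.exists_almostEq_fwdOrbit (h : EvTrans g t) {p : X n}
    (hp : Injective fun k : ℕ => (g ^ k) p) :
    ∃ (i : Fin n) (r : ℕ), 0 < t i ∧ r < (t i).natAbs ∧ AlmostEq (fwdOrbit g p) (Xir i t r) := by
  obtain ⟨z, hz⟩ := h
  obtain ⟨K, i, m₀, hpos, hprog⟩ := hz.exists_progression hp
  refine ⟨i, m₀ % (t i).natAbs, hpos, Nat.mod_lt _ (Int.natAbs_pos.2 hpos.ne'),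
    (almostEq_range_add _ K).trans ?_⟩
  simp only [hprog]
  exact almostEq_range_Xir i t m₀

end HoughtonPaper

theorem statement4_general (n : ℕ) (g : Equiv.Perm (X n)) (t : Fin n → ℤ)
    (hg : EvTrans g t) (A : Set (X n)) (hA : IsInfOrbit g A) :
    ∃ i j : Fin n, i ≠ j ∧ t i ≠ 0 ∧ t j ≠ 0 ∧
      ∃ r s : ℕ, r < (t i).natAbs ∧ s < (t j).natAbs ∧
        AlmostEq A (Xir i t r ∪ Xir j t s) := by
  obtain ⟨⟨p, rfl⟩, hinf⟩ := hA
  have hinj := Equiv.Perm.injective_zpow_apply_of_infinite hinf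
  obtain ⟨i, r, hti, hr, hi⟩ :=
    hg.exists_almostEq_fwdOrbit (Equiv.Perm.injective_pow_apply_of_injective_zpow hinj)
  obtain ⟨j, s, htj, hs, hj⟩ := hg.inv.exists_almostEq_fwdOrbit
    (Equiv.Perm.injective_pow_apply_of_injective_zpow
      (Equiv.Perm.injective_zpow_inv_apply_of_injective_zpow hinj))
  simp only [Pi.neg_apply, neg_pos, Int.natAbs_neg, Xir_neg] at htj hs hj
  refine ⟨i, j, fun hij => by rw [hij] at hti; omega, hti.ne', htj.ne, r, s, hr, hs, ?_⟩
  rw [orbit_eq_fwdOrbit_union]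
  exact hi.union hj

theorem statement4 (n : ℕ) (hn : 2 ≤ n) (g : Equiv.Perm (X n)) (t : Fin n → ℤ)
    (hg : EvTrans g t) (A : Set (X n)) (hA : IsInfOrbit g A) :
    ∃ i j : Fin n, i ≠ j ∧ t i ≠ 0 ∧ t j ≠ 0 ∧
      ∃ r s : ℕ, r < (t i).natAbs ∧ s < (t j).natAbs ∧
        AlmostEq A (Xir i t r ∪ Xir j t s) :=
  statement4_general n g t hg A hA
end

section
/- For every g ∈ H_n, the number of distinct infinite orbits of g on X_n is finite and equals (1/2)·∑_{i=1}^n |t_i(g)|. -/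
open HoughtonPaper

/-!
On the rays with `t i > 0`, beyond the point `z` from which `g` is a translation, the points
`(i, z + r)` with `r < t i` lie in pairwise distinct infinite orbits and every point of the tail
of the ray lies in one of them. Conversely every infinite orbit climbs some ray with `t i > 0`:
it leaves each finite set, and on a ray with `t i ≤ 0` it could only move downwards. Hence `g`
has exactly `∑ (t i)⁺` infinite orbits; applied to `g⁻¹`, which has the same orbits and
translation vector `-t`, the same count is `∑ (t i)⁻`, and the two counts add up to `∑ |t i|`.
-/

namespace HoughtonPaper

variable {n : ℕ} {g : Equiv.Perm (X n)}

theorem orbit_eq_setOf_sameCycle (g : Equiv.Perm (X n)) (p : X n) :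
    orbit g p = {q | g.SameCycle p q} :=
  rfl

theorem orbit_eq_of_mem {p q : X n} (h : q ∈ orbit g p) : orbit g q = orbit g p := by
  rw [orbit_eq_setOf_sameCycle] at h ⊢
  ext x
  exact ⟨h.trans, h.symm.trans⟩

theorem orbit_inv (g : Equiv.Perm (X n)) (p : X n) : orbit g⁻¹ p = orbit g p := by
  ext q
  exact Equiv.Perm.sameCycle_inv

theorem setOf_isInfOrbit_inv : {A | IsInfOrbit g⁻¹ A} = {A | IsInfOrbit g A} := by
  simp only [IsInfOrbit, orbit_inv]

theorem injective_zpow_apply_of_infinite {p : X n} (h : (orbit g p).Infinite) :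
    Function.Injective fun k : ℤ => (g ^ k) p := by
  intro a b hab
  by_contra hne
  set e := b - a with he
  have hfix : (g ^ e) p = p := by
    rw [he, sub_eq_neg_add, zpow_add, Equiv.Perm.mul_apply, ← show (g ^ a) p = (g ^ b) p from hab,
      zpow_neg]
    simp
  have hmod : ∀ k : ℤ, (g ^ k) p = (g ^ (k % e)) p := by
    intro k
    conv_lhs => rw [← Int.emod_add_mul_ediv k e]
    rw [zpow_add, zpow_mul, Equiv.Perm.mul_apply,
      Equiv.Perm.zpow_apply_eq_self_of_apply_eq_self hfix]
  refine h (((Set.finite_Ico 0 |e|).image fun k : ℤ => (g ^ k) p).subset ?_)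
  rintro _ ⟨k, rfl⟩
  exact ⟨k % e, ⟨Int.emod_nonneg k (by omega), Int.emod_lt_abs k (by omega)⟩, (hmod k).symm⟩

theorem finite_setOf_snd_lt_s5 (w : ℕ) : {q : X n | q.2 < w}.Finite := by
  rw [show {q : X n | q.2 < w} = Set.univ ×ˢ Set.Iio w by ext; simp]
  exact Set.finite_univ.prod (Set.finite_Iio w)

theorem exists_forall_le_snd_zpow_apply {p : X n} (h : (orbit g p).Infinite) (w : ℕ) :
    ∃ k₀ : ℤ, ∀ k, k₀ ≤ k → w ≤ ((g ^ k) p).2 := by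
  obtain ⟨b, hb⟩ :=
    ((finite_setOf_snd_lt_s5 w).preimage (injective_zpow_apply_of_infinite h).injOn).bddAbove
  refine ⟨b + 1, fun k hk => ?_⟩
  by_contra hlt
  have : k ≤ b := hb (not_le.mp hlt)
  omega

def tailOrbit (g : Equiv.Perm (X n)) (t : Fin n → ℤ) (z : ℕ) (x : Σ i, Fin (t i).toNat) :
    Set (X n) :=
  orbit g (x.1, z + x.2)

namespace EvTransFrom

variable {t : Fin n → ℤ} {z : ℕ}

theorem apply_of_nonneg (h : EvTransFrom g t z) {i : Fin n} {m : ℕ} (hm : z ≤ m)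
    (hi : 0 ≤ t i) : g (i, m) = (i, m + (t i).toNat) := by
  obtain ⟨hfst, hsnd⟩ := h i m hm
  exact Prod.ext hfst (by omega)

theorem pow_apply_of_nonneg (h : EvTransFrom g t z) {i : Fin n} {m : ℕ} (hm : z ≤ m)
    (hi : 0 ≤ t i) (k : ℕ) : (g ^ k) (i, m) = (i, m + k * (t i).toNat) := by
  induction k with
  | zero => simp
  | succ k ih =>
    rw [pow_succ', Equiv.Perm.mul_apply, ih, h.apply_of_nonneg (by omega) hi, add_one_mul,
      add_assoc]

theorem pow_apply_mem_of_nonpos (h : EvTransFrom g t z) {i : Fin n} (hi : t i ≤ 0) {m : ℕ}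
    (hhigh : ∀ j : ℕ, z ≤ ((g ^ j) (i, m)).2) (j : ℕ) :
    (g ^ j) (i, m) ∈ ({i} ×ˢ Set.Iic m : Set (X n)) := by
  induction j with
  | zero => simp
  | succ j ih =>
    obtain ⟨m', hm'⟩ : ∃ m', (g ^ j) (i, m) = (i, m') := ⟨_, Prod.ext ih.1 rfl⟩
    have hzm' : z ≤ m' := by simpa [hm'] using hhigh j
    have hm'm : m' ≤ m := by simpa [hm'] using ih.2
    obtain ⟨hfst, hsnd⟩ := h i m' hzm'
    rw [pow_succ', Equiv.Perm.mul_apply, hm']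
    exact ⟨hfst, show (g (i, m')).2 ≤ m by omega⟩

theorem orbit_infinite (h : EvTransFrom g t z) {i : Fin n} (hi : 0 < t i) {m : ℕ}
    (hm : z ≤ m) : (orbit g (i, m)).Infinite := by
  refine Set.infinite_of_injective_forall_mem
    (f := fun k : ℕ => ((i, m + k * (t i).toNat) : X n)) (fun a b hab => ?_) fun k => ?_
  · have : a * (t i).toNat = b * (t i).toNat := by simpa using hab
    exact Nat.eq_of_mul_eq_mul_right (by omega) this
  · exact ⟨k, by simp [h.pow_apply_of_nonneg hm hi.le]⟩

theorem exists_mem_orbit_of_infinite (h : EvTransFrom g t z) {p : X n}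
    (hinf : (orbit g p).Infinite) :
    ∃ (i : Fin n) (m : ℕ), z ≤ m ∧ 0 < t i ∧ (i, m) ∈ orbit g p := by
  obtain ⟨k₀, hk₀⟩ := exists_forall_le_snd_zpow_apply hinf z
  obtain ⟨⟨i, m⟩, hq⟩ : ∃ q, (g ^ k₀) p = q := ⟨_, rfl⟩
  have hmem : (i, m) ∈ orbit g p := ⟨k₀, hq⟩
  refine ⟨i, m, by simpa [hq] using hk₀ k₀ le_rfl, ?_, hmem⟩
  by_contra hi
  have hhigh : ∀ j : ℕ, z ≤ ((g ^ j) (i, m)).2 := by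
    intro j
    rw [← hq, ← Equiv.Perm.mul_apply, ← zpow_natCast, ← zpow_add]
    exact hk₀ _ (by omega)
  have hinj : Function.Injective fun j : ℕ => (g ^ j) (i, m) := by
    rw [← orbit_eq_of_mem hmem] at hinf
    simpa [Function.comp_def] using
      (injective_zpow_apply_of_infinite hinf).comp Nat.cast_injective
  exact Set.infinite_of_injective_forall_mem hinj (h.pow_apply_mem_of_nonpos (by omega) hhigh)
    ((Set.finite_singleton i).prod (Set.finite_Iic m))

theorem mem_orbit_mod (h : EvTransFrom g t z) {i : Fin n} (hi : 0 < t i) {m : ℕ}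
    (hm : z ≤ m) : (i, m) ∈ orbit g (i, z + (m - z) % (t i).toNat) := by
  refine ⟨((m - z) / (t i).toNat : ℕ), ?_⟩
  dsimp only
  rw [zpow_natCast, h.pow_apply_of_nonneg (Nat.le_add_right _ _) hi.le, add_assoc,
    Nat.mod_add_div', Nat.add_sub_cancel' hm]

theorem eq_of_pow_apply_eq (h : EvTransFrom g t z) {i j : Fin n} {r s : ℕ}
    (hr : r < (t i).toNat) (hs : s < (t j).toNat) {k : ℕ}
    (hk : (g ^ k) (i, z + r) = (j, z + s)) : i = j ∧ r = s := by
  rw [h.pow_apply_of_nonneg (Nat.le_add_right _ _) (by omega), Prod.mk.injEq] at hk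
  obtain ⟨rfl, hk⟩ := hk
  refine ⟨rfl, ?_⟩
  cases k with
  | zero => omega
  | succ k => rw [add_one_mul] at hk; omega

theorem eq_of_sameCycle (h : EvTransFrom g t z) {i j : Fin n} {r s : ℕ}
    (hr : r < (t i).toNat) (hs : s < (t j).toNat)
    (hc : g.SameCycle (i, z + r) (j, z + s)) : i = j ∧ r = s := by
  obtain ⟨k, hk⟩ := hc
  obtain ⟨k, rfl | rfl⟩ := Int.eq_nat_or_neg k
  · exact h.eq_of_pow_apply_eq hr hs (by simpa using hk)
  · obtain ⟨hji, hsr⟩ := h.eq_of_pow_apply_eq hs hr (k := k)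
      (by rw [← hk, zpow_neg, zpow_natCast]; simp)
    exact ⟨hji.symm, hsr.symm⟩

theorem tailOrbit_injective (h : EvTransFrom g t z) : Function.Injective (tailOrbit g t z) := by
  rintro ⟨i, r⟩ ⟨j, s⟩ heq
  have hmem : ((j, z + s) : X n) ∈ orbit g (i, z + r) := by
    rw [show orbit g (i, z + r) = tailOrbit g t z ⟨i, r⟩ from rfl, heq]
    exact ⟨0, rfl⟩
  obtain ⟨rfl, hrs⟩ := h.eq_of_sameCycle r.isLt s.isLt hmem
  rw [Fin.ext hrs]

theorem setOf_isInfOrbit_eq_range (h : EvTransFrom g t z) :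
    {A | IsInfOrbit g A} = Set.range (tailOrbit g t z) := by
  ext A
  constructor
  · rintro ⟨⟨p, rfl⟩, hinf⟩
    obtain ⟨i, m, hm, hi, hmem⟩ := h.exists_mem_orbit_of_infinite hinf
    refine ⟨⟨i, ⟨(m - z) % (t i).toNat, Nat.mod_lt _ (by omega)⟩⟩, ?_⟩
    rw [← orbit_eq_of_mem hmem]
    exact (orbit_eq_of_mem (h.mem_orbit_mod hi hm)).symm
  · rintro ⟨x, rfl⟩
    exact ⟨⟨_, rfl⟩, h.orbit_infinite (by have := x.2.isLt; omega) (Nat.le_add_right _ _)⟩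

theorem finite_setOf_isInfOrbit (h : EvTransFrom g t z) : {A | IsInfOrbit g A}.Finite := by
  rw [h.setOf_isInfOrbit_eq_range]
  exact Set.finite_range _

theorem ncard_setOf_isInfOrbit (h : EvTransFrom g t z) :
    {A | IsInfOrbit g A}.ncard = ∑ i, (t i).toNat := by
  rw [h.setOf_isInfOrbit_eq_range, Set.ncard_range_of_injective h.tailOrbit_injective]
  simp

theorem inv (h : EvTransFrom g t z) : EvTransFrom g⁻¹ (-t) (z + ∑ i, (t i).natAbs) := by
  intro i m hm
  have hti : (t i).natAbs ≤ ∑ j, (t j).natAbs :=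
    Finset.single_le_sum (f := fun j => (t j).natAbs) (fun _ _ => Nat.zero_le _)
      (Finset.mem_univ i)
  obtain ⟨hfst, hsnd⟩ := h i ((m : ℤ) - t i).toNat (by omega)
  have hpre : g (i, ((m : ℤ) - t i).toNat) = (i, m) := Prod.ext hfst (by omega)
  rw [Equiv.Perm.inv_eq_iff_eq.mpr hpre.symm]
  exact ⟨rfl, by simp only [Pi.neg_apply]; omega⟩

end EvTransFrom

end HoughtonPaper

theorem statement5_general (n : ℕ) (g : Equiv.Perm (X n)) (t : Fin n → ℤ)
    (hg : EvTrans g t) :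
    {A : Set (X n) | IsInfOrbit g A}.Finite ∧
      2 * {A : Set (X n) | IsInfOrbit g A}.ncard = ∑ i : Fin n, (t i).natAbs := by
  obtain ⟨z, hz⟩ := hg
  have hpos := hz.ncard_setOf_isInfOrbit
  have hneg := hz.inv.ncard_setOf_isInfOrbit
  rw [setOf_isInfOrbit_inv] at hneg
  have hsplit : ∀ i, (t i).natAbs = (t i).toNat + ((-t) i).toNat := fun i => by
    simp only [Pi.neg_apply]; omega
  refine ⟨hz.finite_setOf_isInfOrbit, ?_⟩
  rw [Finset.sum_congr rfl fun i _ => hsplit i, Finset.sum_add_distrib, ← hpos, ← hneg, two_mul]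

theorem statement5 (n : ℕ) (hn : 2 ≤ n) (g : Equiv.Perm (X n)) (t : Fin n → ℤ)
    (hg : EvTrans g t) :
    {A : Set (X n) | IsInfOrbit g A}.Finite ∧
      2 * {A : Set (X n) | IsInfOrbit g A}.ncard = ∑ i : Fin n, (t i).natAbs :=
  statement5_general n g t hg
end

section
/- Let a, b ∈ H_n and let i ∈ {1,…,n} be such that t_i(a) = t_i(b) < 0. Let z ∈ ℕ be such that (i,m)a = (i, m + t_i(a)) and (i,m)b = (i, m + t_i(b)) for all m ≥ z. If x ∈ FSym(X_n) satisfies x^{-1} a x = b, then (i,m)x = (i,m) for all m ≥ z − t_i(a). -/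
open HoughtonPaper

theorem statement7 (n : ℕ) (hn : 2 ≤ n) (a b : Equiv.Perm (X n)) (ta tb : Fin n → ℤ)
    (ha : EvTrans a ta) (hb : EvTrans b tb) (i : Fin n)
    (heq : ta i = tb i) (hneg : ta i < 0) (z : ℕ)
    (hz : ∀ m : ℕ, z ≤ m →
      ((a (i, m)).1 = i ∧ ((a (i, m)).2 : ℤ) = (m : ℤ) + ta i) ∧
      ((b (i, m)).1 = i ∧ ((b (i, m)).2 : ℤ) = (m : ℤ) + tb i))
    (x : Equiv.Perm (X n)) (hx : InFSym x) (hconj : x⁻¹ * a * x = b) :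
    ∀ m : ℕ, (z : ℤ) - ta i ≤ (m : ℤ) → x (i, m) = (i, m) := by
  intro m hm
  set t : ℤ := ta i with ht
  set tn : ℕ := t.natAbs with htn
  have htnz : (tn : ℤ) = -t := by
    rw [htn, Int.natCast_natAbs, abs_of_neg hneg]
  have htn1 : 1 ≤ tn := Int.natAbs_pos.mpr hneg.ne
  -- key iteration lemma
  have key : ∀ k p, z ≤ p →
      (a ^ k) (i, p + k * tn) = (i, p) ∧ (b ^ k) (i, p + k * tn) = (i, p) := by
    intro k
    induction k with
    | zero => intro p _; simp
    | succ k ih =>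
      intro p hp
      have hge : z ≤ p + (k + 1) * tn := le_trans hp (Nat.le_add_right _ _)
      obtain ⟨⟨ha1, ha2⟩, ⟨hb1, hb2⟩⟩ := hz (p + (k + 1) * tn) hge
      have hstep : ∀ (g : Equiv.Perm (X n)), (g (i, p + (k+1) * tn)).1 = i →
          ((g (i, p + (k+1) * tn)).2 : ℤ) = ((p + (k+1) * tn : ℕ) : ℤ) + t →
          g (i, p + (k+1) * tn) = (i, p + k * tn) := by
        intro g h1 h2
        have h2' : (g (i, p + (k+1) * tn)).2 = p + k * tn := by
          have : ((g (i, p + (k+1) * tn)).2 : ℤ) = ((p + k * tn : ℕ) : ℤ) := by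
            rw [h2]
            push_cast
            have : (tn : ℤ) = -t := htnz
            linarith [this]
          exact_mod_cast this
        exact Prod.ext h1 h2'
      have haa : a (i, p + (k+1) * tn) = (i, p + k * tn) := hstep a ha1 ha2
      have hbb : b (i, p + (k+1) * tn) = (i, p + k * tn) := by
        apply hstep b hb1
        rw [hb2, heq]
      constructor
      · rw [pow_succ, Equiv.Perm.mul_apply, haa]
        exact (ih p hp).1
      · rw [pow_succ, Equiv.Perm.mul_apply, hbb]
        exact (ih p hp).2
  -- bound for the support of x
  obtain ⟨M, hM⟩ := ((hx.image Prod.snd).bddAbove)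
  have hfix : ∀ q : X n, M < q.2 → x q = q := by
    intro q hq
    by_contra h
    have : q.2 ∈ Prod.snd '' supp x := ⟨q, h, rfl⟩
    exact absurd (hM this) (not_le.mpr hq)
  -- conjugation: b ^ k = x⁻¹ * a ^ k * x
  have hconjpow : ∀ k : ℕ, b ^ k = x⁻¹ * a ^ k * x := by
    intro k
    rw [← hconj]
    induction k with
    | zero => group
    | succ k ih => rw [pow_succ, pow_succ, ih]; group
  -- now the main argument
  have hzm : z + tn ≤ m := by
    have : (z : ℤ) + tn ≤ (m : ℤ) := by rw [htnz]; linarith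
    exact_mod_cast this
  have hzm' : z ≤ m := le_trans (Nat.le_add_right _ _) hzm
  set k : ℕ := M + 1 with hk
  set m' : ℕ := m + k * tn with hm'
  have hMm' : M < m' := by
    calc M < M + 1 := Nat.lt_succ_self M
    _ ≤ (M + 1) * tn := Nat.le_mul_of_pos_right _ htn1
    _ ≤ m + (M + 1) * tn := Nat.le_add_left _ _
  obtain ⟨hak, hbk⟩ := key k m hzm'
  have hxm' : x (i, m') = (i, m') := hfix (i, m') hMm'
  have hcomm : x ((b ^ k) (i, m')) = (a ^ k) (x (i, m')) := by
    have : x * (b ^ k) = (a ^ k) * x := by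
      rw [hconjpow k]
      group
    calc x ((b ^ k) (i, m')) = (x * (b ^ k)) (i, m') := rfl
    _ = ((a ^ k) * x) (i, m') := by rw [this]
    _ = (a ^ k) (x (i, m')) := rfl
  rw [hbk, hxm', hak] at hcomm
  exact hcomm
end

section
/- Let X be a set and let a, b be permutations of X (acting on the right). Set I = supp(a) ∩ supp(b), and suppose that supp(a) ∖ I and supp(b) ∖ I are finite sets of equal cardinality. Suppose there is a bijection x₀ : supp(a) → supp(b) such that (p a)x₀ = (p x₀) b for all p ∈ supp(a), and such that the set {p ∈ supp(a) : p x₀ ≠ p} is finite. Then there exists a finitely supported permutation x of X with x^{-1} a x = b. -/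
open HoughtonPaper

open Function Set

theorem Set.BijOn.union_of_disjoint {α β : Type*} {f : α → β} {s₁ s₂ : Set α} {t₁ t₂ : Set β}
    (h₁ : BijOn f s₁ t₁) (h₂ : BijOn f s₂ t₂) (ht : Disjoint t₁ t₂) :
    BijOn f (s₁ ∪ s₂) (t₁ ∪ t₂) := by
  refine h₁.union h₂ ?_
  rintro x (hx | hx) y (hy | hy) hxy
  · exact h₁.injOn hx hy hxy
  · exact (ht.ne_of_mem (h₁.mapsTo hx) (h₂.mapsTo hy) hxy).elim
  · exact (ht.ne_of_mem (h₁.mapsTo hy) (h₂.mapsTo hx) hxy.symm).elim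
  · exact h₂.injOn hx hy hxy

theorem Function.bijective_of_bijOn_of_bijOn_sdiff {α : Type*} {f : α → α} {s t : Set α}
    (h₁ : BijOn f s t) (h₂ : BijOn f (t \ s) (s \ t)) (h₃ : EqOn f id (s ∪ t)ᶜ) :
    Bijective f := by
  have hst : BijOn f (s ∪ t) (s ∪ t) := by
    simpa only [union_sdiff_self, union_comm t s] using h₁.union_of_disjoint h₂ disjoint_sdiff_right
  rw [← bijOn_univ, ← union_compl_self (s ∪ t)]
  exact hst.union_of_disjoint ((bijOn_id _).congr h₃.symm) disjoint_compl_right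

namespace HoughtonPaper

variable {α : Type*}

theorem supp_inv (g : Equiv.Perm α) : supp g⁻¹ = supp g := by
  ext p
  exact not_congr (Equiv.Perm.inv_eq_iff_eq.trans eq_comm)

theorem exists_perm_eqOn_of_bijOn {s t : Set α} {f : α → α} (hf : BijOn f s t)
    (hfin : (t \ s).Finite) (hcard : (t \ s).encard = (s \ t).encard) :
    ∃ e : Equiv.Perm α, EqOn e f s ∧ supp e ⊆ {p ∈ s | f p ≠ p} ∪ t \ s := by
  classical
  cases isEmpty_or_nonempty α
  · exact ⟨1, fun p => isEmptyElim p, fun p => isEmptyElim p⟩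
  obtain ⟨g, hg⟩ := hfin.exists_bijOn_of_encard_eq hcard
  set F := s.piecewise f ((t \ s).piecewise g id)
  have hF : Bijective F := by
    refine bijective_of_bijOn_of_bijOn_sdiff (hf.congr fun p hp => ?_)
      (hg.congr fun p hp => ?_) fun p hp => ?_
    · simp [F, hp]
    · simp [F, hp.1, hp.2]
    · simp only [mem_compl_iff, mem_union, not_or] at hp
      simp [F, hp.1, hp.2]
  refine ⟨Equiv.ofBijective F hF, fun p hp => by simp [F, hp], fun p hp => ?_⟩
  by_cases hps : p ∈ s
  · exact .inl ⟨hps, by simpa [supp, F, hps] using hp⟩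
  · by_cases hpt : p ∈ t
    · exact .inr ⟨hpt, hps⟩
    · simp [supp, F, hps, hpt] at hp

theorem semiconj_of_forall_mem_supp {a b : Equiv.Perm α} {f : α → α}
    (hint : ∀ p ∈ supp a, f (a p) = b (f p)) (hcompl : MapsTo f (supp a)ᶜ (supp b)ᶜ) :
    Semiconj f a b := by
  intro p
  by_cases hp : p ∈ supp a
  · exact hint p hp
  · have hbp := hcompl hp
    simp only [supp, mem_compl_iff, mem_ofPred_eq, not_not] at hp hbp
    rw [hp, hbp]

end HoughtonPaper

theorem statement8 (α : Type*) (a b : Equiv.Perm α)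
    (hfa : (supp a \ (supp a ∩ supp b)).Finite)
    (hfb : (supp b \ (supp a ∩ supp b)).Finite)
    (hcard : (supp a \ (supp a ∩ supp b)).ncard = (supp b \ (supp a ∩ supp b)).ncard)
    (x₀ : α → α) (hbij : Set.BijOn x₀ (supp a) (supp b))
    (hint : ∀ p ∈ supp a, x₀ (a p) = b (x₀ p))
    (hfin : {p ∈ supp a | x₀ p ≠ p}.Finite) :
    ∃ x : Equiv.Perm α, (supp x).Finite ∧ x⁻¹ * a * x = b := by
  rw [sdiff_self_inter] at hfa hcard
  rw [sdiff_inter_self_eq_sdiff] at hfb hcard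
  obtain ⟨e, hex, hsupp⟩ := exists_perm_eqOn_of_bijOn hbij hfb
    (by rw [← hfb.cast_ncard_eq, ← hfa.cast_ncard_eq, hcard])
  have hconj : Semiconj e a b := semiconj_of_forall_mem_supp
    (fun p hp => by rw [hex hp, hex (a.injective.ne hp)]; exact hint p hp)
    ((hbij.congr hex.symm).compl e.bijective).mapsTo
  -- `*` on `Equiv.Perm` is composition, so the paper's right-action conjugate `x⁻¹ a x` is
  -- `e * a * e⁻¹` here.
  refine ⟨e⁻¹, (supp_inv e).symm ▸ (hfin.union hfb).subset hsupp, ?_⟩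
  ext p
  simpa using hconj (e.symm p)
end

section
/- Houghton's group H_2 equals the subgroup of Sym(X_2) generated by the permutation g_2 and the transposition τ exchanging (1,0) and (2,0). -/
open HoughtonPaper

/-!
Number the points of `X 2` by `ℤ`, ray `0` (the paper's ray 1) carrying `k ≥ 0` and ray `1`
carrying `k < 0`. Then `g₂` is `k ↦ k + 1` and `τ` swaps `-1` and `0`, so conjugating `τ` by
powers of `g₂` gives every transposition of neighbours, and these generate all finitary
permutations. Conversely, counting the image of a long initial segment of the rays shows that the
translation vector of an eventual translation sums to `0`; so for `g ∈ H₂` the permutation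
`g * g₂ ^ (-t₀)` is eventually the identity, i.e. finitary.
-/

namespace HoughtonPaper

open Equiv MulAction

section Translations

variable {n : ℕ} {g g' : Perm (X n)} {t t' : Fin n → ℤ} {z z' : ℕ}

lemma natAbs_le_sum_natAbs (t : Fin n → ℤ) (i : Fin n) : (t i).natAbs ≤ ∑ j, (t j).natAbs :=
  Finset.single_le_sum (f := fun j ↦ (t j).natAbs) (fun _ _ ↦ Nat.zero_le _) (Finset.mem_univ i)

lemma EvTransFrom.mul (hg : EvTransFrom g t z) (hg' : EvTransFrom g' t' z') :
    EvTransFrom (g * g') (t + t') (z + z' + ∑ i, (t' i).natAbs) := by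
  intro i m hm
  have hi := natAbs_le_sum_natAbs t' i
  obtain ⟨h1, h2⟩ := hg' i m (by omega)
  obtain ⟨k1, k2⟩ := hg i (g' (i, m)).2 (by omega)
  rw [Perm.mul_apply, ← Prod.mk.eta (p := g' (i, m)), h1]
  exact ⟨k1, by rw [k2, h2, Pi.add_apply]; ring⟩

lemma EvTransFrom.inv_s18 (hg : EvTransFrom g t z) :
    EvTransFrom g⁻¹ (-t) (z + ∑ i, (t i).natAbs) := by
  intro i m hm
  have hi := natAbs_le_sum_natAbs t i
  obtain ⟨k1, k2⟩ := hg i (m - t i).toNat (by omega)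
  have hg_apply : g (i, (m - t i).toNat) = (i, m) := Prod.ext k1 (by omega)
  rw [Perm.inv_eq_iff_eq.mpr hg_apply.symm]
  exact ⟨rfl, by simp only [Pi.neg_apply]; omega⟩

lemma EvTransFrom.sum_le_zero (hg : EvTransFrom g t z) : ∑ i, t i ≤ 0 := by
  set N := z + ∑ i, (t i).natAbs
  let B : Finset (X n) := Finset.univ ×ˢ Finset.range N
  let C : Finset (X n) := Finset.univ.biUnion fun i ↦ {i} ×ˢ Finset.range (N + t i).toNat
  have hmaps : Set.MapsTo ⇑g⁻¹ C B := by
    rintro ⟨i, m⟩ hp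
    have hm : (m : ℤ) < N + t i := by simpa [C] using hp
    suffices ¬ N ≤ (g⁻¹ (i, m)).2 by simpa [B] using this
    intro hN
    have hq : g (g⁻¹ (i, m)) = (i, m) := by simp
    obtain ⟨h1, h2⟩ := hg _ _ (le_trans (Nat.le_add_right z _) hN)
    rw [Prod.mk.eta, hq] at h1 h2
    dsimp only at h1 h2
    rw [← h1] at h2
    omega
  have hcard : (C.card : ℤ) ≤ B.card :=
    mod_cast Finset.card_le_card_of_injOn _ hmaps g⁻¹.injective.injOn
  have hC : C.card = ∑ i, (N + t i).toNat := by
    rw [Finset.card_biUnion fun i _ j _ hij ↦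
      Finset.disjoint_product.mpr (Or.inl (Finset.disjoint_singleton.mpr hij))]
    simp
  have hN : ∀ i, (((N : ℤ) + t i).toNat : ℤ) = N + t i := fun i ↦
    Int.toNat_of_nonneg (by have := natAbs_le_sum_natAbs t i; omega)
  simp only [hC, B, Finset.card_product, Finset.card_univ, Fintype.card_fin, Finset.card_range,
    Nat.cast_sum, hN, Finset.sum_add_distrib, Finset.sum_const, nsmul_eq_mul,
    Nat.cast_mul] at hcard
  linarith

lemma EvTransFrom.sum_eq_zero (hg : EvTransFrom g t z) : ∑ i, t i = 0 := by
  have := hg.inv_s18.sum_le_zero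
  simp only [Pi.neg_apply, Finset.sum_neg_distrib, Left.neg_nonpos_iff] at this
  exact le_antisymm hg.sum_le_zero this

lemma EvTransFrom.finite_compl_fixedBy (hg : EvTransFrom g 0 z) : (fixedBy (X n) g)ᶜ.Finite := by
  refine (Set.finite_univ.prod (Set.finite_Iio z)).subset fun x hx ↦ ⟨trivial, ?_⟩
  by_contra! hzx
  obtain ⟨h1, h2⟩ := hg x.1 x.2 (by simpa using hzx)
  exact hx (Prod.ext h1 (by simpa using h2))

end Translations

def houghton (n : ℕ) : Subgroup (Perm (X n)) where
  carrier := {g | InH g}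
  one_mem' := ⟨0, 0, fun _ _ _ ↦ by simp⟩
  mul_mem' := fun ⟨_, _, hg⟩ ⟨_, _, hg'⟩ ↦ ⟨_, _, hg.mul hg'⟩
  inv_mem' := fun ⟨_, _, hg⟩ ↦ ⟨_, _, hg.inv_s18⟩

section TwoRays

local notation "g₂" => gen (1 : Fin 2) (by decide)

lemma gen_mem_closure : g₂ ∈ Subgroup.closure {g₂, tau 2} :=
  Subgroup.subset_closure (Set.mem_insert _ _)

lemma tau_mem_closure : tau 2 ∈ Subgroup.closure {g₂, tau 2} :=
  Subgroup.subset_closure (Set.mem_insert_of_mem _ rfl)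

def ofInt : ℤ → X 2
  | .ofNat m => (0, m)
  | .negSucc m => (1, m)

lemma ofInt_surjective : Function.Surjective ofInt := by
  rintro ⟨i, m⟩
  fin_cases i
  exacts [⟨.ofNat m, rfl⟩, ⟨.negSucc m, rfl⟩]

lemma ofInt_of_nonneg {k : ℤ} (hk : 0 ≤ k) : ofInt k = (0, k.toNat) := by
  lift k to ℕ using hk
  rfl

lemma ofInt_of_neg {k : ℤ} (hk : k < 0) : ofInt k = (1, (-k - 1).toNat) := by
  obtain ⟨m, rfl⟩ := Int.eq_negSucc_of_lt_zero hk
  simp only [ofInt, Prod.mk.injEq, true_and]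
  omega

lemma gen_ofInt (k : ℤ) : g₂ (ofInt k) = ofInt (k + 1) := by
  rcases k with m | _ | m <;> rfl

lemma zpow_gen_ofInt (j k : ℤ) : (g₂ ^ j) (ofInt k) = ofInt (k + j) := by
  have inv_gen_ofInt (k : ℤ) : g₂⁻¹ (ofInt k) = ofInt (k - 1) :=
    Perm.inv_eq_iff_eq.mpr (by rw [gen_ofInt, sub_add_cancel])
  induction j using Int.induction_on generalizing k with
  | zero => simp
  | succ j ih =>
    rw [zpow_add_one, Perm.mul_apply, gen_ofInt, ih, add_right_comm, add_assoc]
  | pred j ih =>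
    rw [zpow_sub_one, Perm.mul_apply, inv_gen_ofInt, ih, sub_add_eq_add_sub, add_sub_assoc]

lemma tau_two_eq_swap : tau 2 = swap (ofInt (-1)) (ofInt 0) := swap_comm _ _

lemma swap_ofInt_mem_closure (k : ℤ) :
    swap (ofInt k) (ofInt (k + 1)) ∈ Subgroup.closure {g₂, tau 2} := by
  have hconj := swap_apply_apply (g₂ ^ (k + 1)) (ofInt (-1)) (ofInt 0)
  rw [zpow_gen_ofInt, zpow_gen_ofInt, ← tau_two_eq_swap, zero_add,
    show -1 + (k + 1) = k by ring] at hconj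
  rw [hconj]
  exact mul_mem (mul_mem (zpow_mem gen_mem_closure _) tau_mem_closure)
    (inv_mem (zpow_mem gen_mem_closure _))

lemma swap_mem_closure_gen_tau (x y : X 2) : swap x y ∈ Subgroup.closure {g₂, tau 2} := by
  suffices h : ∀ k l, k ≤ l → swap (ofInt k) (ofInt l) ∈ Subgroup.closure {g₂, tau 2} by
    obtain ⟨k, rfl⟩ := ofInt_surjective x
    obtain ⟨l, rfl⟩ := ofInt_surjective y
    rcases le_total k l with hkl | hlk
    · exact h k l hkl
    · exact swap_comm (ofInt k) _ ▸ h l k hlk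
  intro k l hkl
  induction l, hkl using Int.leInduction with
  | base => rw [swap_self]; exact one_mem _
  | succ l _ ih => exact SubmonoidClass.swap_mem_trans _ ih (swap_ofInt_mem_closure l)

lemma mem_closure_gen_tau_of_finite {f : Perm (X 2)} (hf : (fixedBy (X 2) f)ᶜ.Finite) :
    f ∈ Subgroup.closure {g₂, tau 2} := by
  refine (Subgroup.closure_le _).mpr ?_ (mem_closure_isSwap'.mpr hf)
  rintro _ ⟨x, y, -, rfl⟩
  exact swap_mem_closure_gen_tau x y

lemma evTransFrom_zpow_gen (j : ℤ) : EvTransFrom (g₂ ^ j) ![j, -j] j.natAbs := by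
  intro i m hm
  match i with
  | 0 =>
    rw [show ((0 : Fin 2), m) = ofInt m from rfl, zpow_gen_ofInt, ofInt_of_nonneg (by omega)]
    refine ⟨rfl, ?_⟩
    simp only [Int.ofNat_toNat, Matrix.cons_val_zero]
    omega
  | 1 =>
    rw [show ((1 : Fin 2), m) = ofInt (.negSucc m) from rfl, zpow_gen_ofInt,
      ofInt_of_neg (by omega)]
    refine ⟨rfl, ?_⟩
    simp only [Int.ofNat_toNat, Matrix.cons_val_one, Matrix.cons_val_fin_one, Int.negSucc_eq]
    omega

lemma evTransFrom_tau : EvTransFrom (tau 2) 0 1 := by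
  intro i m hm
  have hm0 : m ≠ 0 := by omega
  have hfix : tau 2 (i, m) = (i, m) :=
    swap_apply_of_ne_of_ne (ne_of_apply_ne Prod.snd hm0) (ne_of_apply_ne Prod.snd hm0)
  simp [hfix]

lemma closure_gen_tau_le_houghton : Subgroup.closure {g₂, tau 2} ≤ houghton 2 := by
  rw [Subgroup.closure_le]
  rintro _ (rfl | rfl)
  · exact ⟨_, _, zpow_one g₂ ▸ evTransFrom_zpow_gen 1⟩
  · exact ⟨_, _, evTransFrom_tau⟩

end TwoRays

end HoughtonPaper

theorem statement18 (g : Equiv.Perm (X 2)) :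
    InH g ↔ g ∈ Subgroup.closure {gen (1 : Fin 2) (by decide), tau 2} := by
  refine ⟨fun ⟨t, z, ht⟩ ↦ ?_, fun hg ↦ closure_gen_tau_le_houghton hg⟩
  have hsum : t 0 + t 1 = 0 := by simpa using ht.sum_eq_zero
  have hdiff : t + ![-t 0, -(-t 0)] = 0 := by
    ext i
    fin_cases i <;> simp [eq_neg_of_add_eq_zero_right hsum]
  have hf := ht.mul (evTransFrom_zpow_gen (-t 0))
  rw [hdiff] at hf
  simpa using mul_mem (mem_closure_gen_tau_of_finite hf.finite_compl_fixedBy)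
    (zpow_mem gen_mem_closure (t 0))
end
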